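/- Let |Ψ⁻⟩ = (|01⟩ - |10⟩)/√2 and let W_f = f|Ψ⁻⟩⟨Ψ⁻| + ((1-f)/4)𝟙₄ be a Werner state. For rotationally covariant POVM densities M_φ^{r_A} and M_ψ^{r_B} (where M_φ^r = (1/π)U_φ*(𝟙 + r σ_x)U_φ, U_φ = exp(-iφσ_z)), the joint probability density satisfies tr[W_f (M_φ^{r_A} ⊗ M_ψ^{r_B})] = (1 - f r_A r_B cos(2(φ - ψ)))/π². -/

import Mathlib

open Matrix Complex
open scoped Matrix Kronecker Real ComplexOrder

noncomputable section

/-- The Pauli matrix `σ_x`. -/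
def σx : Matrix (Fin 2) (Fin 2) ℂ := !![0, 1; 1, 0]
/-- The Pauli matrix `σ_y`. -/
def σy : Matrix (Fin 2) (Fin 2) ℂ := !![0, -Complex.I; Complex.I, 0]
/-- The Pauli matrix `σ_z`. -/
def σz : Matrix (Fin 2) (Fin 2) ℂ := !![1, 0; 0, -1]

/-- `U φ = exp(-i φ σ_z)`, the unitary rotation about the z-axis. -/
def U (φ : ℝ) : Matrix (Fin 2) (Fin 2) ℂ :=
  NormedSpace.exp ((-(Complex.I * (φ : ℂ))) • σz)

/-- The rotationally covariant POVM density `M_φ^r = (1/π) U_φ* (𝟙 + r σ_x) U_φ`. -/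
def Mpovm (r φ : ℝ) : Matrix (Fin 2) (Fin 2) ℂ :=
  ((π : ℂ))⁻¹ • ((U φ)ᴴ * ((1 : Matrix (Fin 2) (Fin 2) ℂ) + (r : ℂ) • σx) * U φ)

/-- A density matrix: positive semidefinite with unit trace. -/
def IsDensity {n : Type*} [Fintype n] [DecidableEq n] (ρ : Matrix n n ℂ) : Prop :=
  ρ.PosSemidef ∧ ρ.trace = 1

/-- The singlet vector `|Ψ⁻⟩ = (|01⟩ - |10⟩)/√2`. -/
def ψminus : Fin 2 × Fin 2 → ℂ := fun p =>
  if p = (0, 1) then (Real.sqrt 2)⁻¹ else if p = (1, 0) then -(Real.sqrt 2)⁻¹ else 0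

/-- The projector `|Ψ⁻⟩⟨Ψ⁻|`. -/
def singletProj : Matrix (Fin 2 × Fin 2) (Fin 2 × Fin 2) ℂ :=
  Matrix.vecMulVec ψminus (fun j => (starRingEnd ℂ) (ψminus j))

/-- The Werner state `W_f = f |Ψ⁻⟩⟨Ψ⁻| + ((1-f)/4) 𝟙₄`. -/
def Werner (f : ℝ) : Matrix (Fin 2 × Fin 2) (Fin 2 × Fin 2) ℂ :=
  (f : ℂ) • singletProj + (((1 - f) / 4 : ℝ) : ℂ) • (1 : Matrix (Fin 2 × Fin 2) (Fin 2 × Fin 2) ℂ)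

/-!
Since `σ_z` is diagonal, conjugating `𝟙 + r σ_x` by `U_φ` only multiplies the off-diagonal
entries by the phases `e^{± 2 i φ}`. The noise part of `W_f` contributes
`tr M_A · tr M_B / 4 = 1 / π²`, while the singlet picks out the antidiagonal entries of
`M_A ⊗ M_B`, whose phases combine into `cos (2 (φ - ψ))`.
-/

lemma U_eq_diagonal (φ : ℝ) :
    U φ = diagonal ![Complex.exp (-(φ * Complex.I)), Complex.exp (φ * Complex.I)] := by
  have hσz : σz = diagonal ![1, -1] := by
    ext i j; fin_cases i <;> fin_cases j <;> simp [σz]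
  rw [U, hσz, ← diagonal_smul, exp_diagonal]
  congr 1
  ext i; fin_cases i <;> simp [← Complex.exp_eq_exp_ℂ, mul_comm]

lemma Mpovm_eq (r φ : ℝ) : Mpovm r φ = (π : ℂ)⁻¹ •
    !![1, r * Complex.exp (2 * φ * Complex.I); r * Complex.exp (-(2 * φ * Complex.I)), 1] := by
  rw [Mpovm, U_eq_diagonal]
  congr 1
  ext i j
  fin_cases i <;> fin_cases j <;>
    simp [mul_apply, Fin.sum_univ_two, σx, ← Complex.exp_conj, ← Complex.exp_add] <;>
    rw [mul_right_comm, ← Complex.exp_add] <;> ring_nf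

lemma trace_Mpovm (r φ : ℝ) : (Mpovm r φ).trace = 2 / π := by
  rw [Mpovm_eq, trace_smul, trace_fin_two]
  simp only [of_apply, cons_val', cons_val_zero, cons_val_one, empty_val', cons_val_fin_one,
    smul_eq_mul]
  ring

lemma trace_Werner_mul {f : ℝ} (M : Matrix (Fin 2 × Fin 2) (Fin 2 × Fin 2) ℂ) :
    (Werner f * M).trace = f * (singletProj * M).trace + ((1 - f) / 4 : ℝ) * M.trace := by
  simp [Werner, add_mul, trace_add, trace_smul]

lemma trace_singletProj_mul_kronecker (A B : Matrix (Fin 2) (Fin 2) ℂ) :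
    (singletProj * (A ⊗ₖ B)).trace
      = (A 0 0 * B 1 1 + A 1 1 * B 0 0 - A 0 1 * B 1 0 - A 1 0 * B 0 1) / 2 := by
  have hsqrt : ((Real.sqrt 2 : ℂ))⁻¹ * ((Real.sqrt 2 : ℂ))⁻¹ = 1 / 2 := by
    rw [← mul_inv, ← Complex.ofReal_mul, Real.mul_self_sqrt zero_le_two]; norm_num
  simp [singletProj, ψminus, trace, mul_apply, vecMulVec_apply, Fintype.sum_prod_type,
    Fin.sum_univ_two, hsqrt]
  ring

lemma trace_singletProj_mul_Mpovm_kronecker (rA rB φ ψ : ℝ) :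
    (singletProj * (Mpovm rA φ ⊗ₖ Mpovm rB ψ)).trace
      = (((1 - rA * rB * Real.cos (2 * (φ - ψ))) / π ^ 2 : ℝ) : ℂ) := by
  have hcos : 2 * Complex.cos (2 * (φ - ψ))
      = Complex.exp (2 * φ * Complex.I) * Complex.exp (-(2 * ψ * Complex.I))
        + Complex.exp (-(2 * φ * Complex.I)) * Complex.exp (2 * ψ * Complex.I) := by
    rw [Complex.two_cos, ← Complex.exp_add, ← Complex.exp_add]
    ring_nf
  rw [trace_singletProj_mul_kronecker, Mpovm_eq, Mpovm_eq]
  simp only [Matrix.smul_apply, of_apply, cons_val', cons_val_zero, cons_val_one, empty_val',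
    cons_val_fin_one, smul_eq_mul]
  push_cast
  linear_combination (rA * rB / (2 * π ^ 2) : ℂ) * hcos

theorem werner_joint_density_general (f rA rB : ℝ) (φ ψ : ℝ) :
    (Werner f * (Mpovm rA φ ⊗ₖ Mpovm rB ψ)).trace
      = (((1 - f * rA * rB * Real.cos (2 * (φ - ψ))) / π ^ 2 : ℝ) : ℂ) := by
  rw [trace_Werner_mul, trace_singletProj_mul_Mpovm_kronecker, trace_kronecker, trace_Mpovm,
    trace_Mpovm]
  push_cast
  field_simp
  ring

/-- the joint probability density of the Werner state `W_f` measured with two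
rotationally covariant POVM densities is
`tr[W_f (M_φ^{r_A} ⊗ M_ψ^{r_B})] = (1 - f r_A r_B cos(2(φ - ψ)))/π²`. -/
theorem werner_joint_density (f rA rB : ℝ) (hf : f ∈ Set.Icc (0:ℝ) 1)
    (hrA : rA ∈ Set.Icc (0:ℝ) 1) (hrB : rB ∈ Set.Icc (0:ℝ) 1) (φ ψ : ℝ) :
    (Werner f * (Mpovm rA φ ⊗ₖ Mpovm rB ψ)).trace
      = (((1 - f * rA * rB * Real.cos (2 * (φ - ψ))) / π ^ 2 : ℝ) : ℂ) :=
  werner_joint_density_general f rA rB φ ψ
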